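/- Let P be a convex polyhedral cone in a finite-dimensional ℚ-vector space and F a face of P (the zero set on P of a linear functional nonnegative on P). Then the cone of P viewed from F, namely the cone generated by { y − x : y ∈ P }, does not depend on the choice of the point x in the relative interior of F. -/
import Mathlib


/-- The convex cone generated by a subset `S` of a `ℚ`-vector space. -/
def coneGen {V : Type*} [AddCommGroup V] [Module ℚ V] (S : Set V) : Set V :=
  {v | ∃ (n : ℕ) (c : Fin n → ℚ) (x : Fin n → V),
      (∀ i, 0 ≤ c i ∧ x i ∈ S) ∧ v = ∑ i, c i • x i}

/-- The (algebraic) relative interior of a convex set `F` in a `ℚ`-vector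
space: the points `x ∈ F` from which one can move slightly past `x` away from
any `y ∈ F` while staying in `F`. -/
def relint {V : Type*} [AddCommGroup V] [Module ℚ V] (F : Set V) : Set V :=
  {x | x ∈ F ∧ ∀ y ∈ F, ∃ ε : ℚ, 0 < ε ∧ x + ε • (x - y) ∈ F}

lemma coneGen_mem {V : Type*} [AddCommGroup V] [Module ℚ V] {S : Set V}
    {s : V} (hs : s ∈ S) : s ∈ coneGen S := by
  refine ⟨1, fun _ => 1, fun _ => s, fun i => ⟨zero_le_one, hs⟩, by simp⟩

lemma coneGen_zero {V : Type*} [AddCommGroup V] [Module ℚ V] (S : Set V) :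
    (0 : V) ∈ coneGen S :=
  ⟨0, Fin.elim0, Fin.elim0, fun i => i.elim0, by simp⟩

lemma coneGen_add {V : Type*} [AddCommGroup V] [Module ℚ V] {S : Set V}
    {a b : V} (ha : a ∈ coneGen S) (hb : b ∈ coneGen S) : a + b ∈ coneGen S := by
  obtain ⟨n, c, x, hc, rfl⟩ := ha
  obtain ⟨m, d, y, hd, rfl⟩ := hb
  refine ⟨n + m, Fin.append c d, Fin.append x y, ?_, ?_⟩
  · intro i
    refine Fin.addCases (fun j => ?_) (fun j => ?_) i
    · simpa [Fin.append_left] using hc j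
    · simpa [Fin.append_right] using hd j
  · rw [Fin.sum_univ_add]
    simp [Fin.append_left, Fin.append_right]

lemma coneGen_smul {V : Type*} [AddCommGroup V] [Module ℚ V] {S : Set V}
    {t : ℚ} (ht : 0 ≤ t) {a : V} (ha : a ∈ coneGen S) : t • a ∈ coneGen S := by
  obtain ⟨n, c, x, hc, rfl⟩ := ha
  refine ⟨n, fun i => t * c i, x, fun i => ⟨mul_nonneg ht (hc i).1, (hc i).2⟩, ?_⟩
  rw [Finset.smul_sum]
  simp [mul_smul]

lemma coneGen_subset {V : Type*} [AddCommGroup V] [Module ℚ V] {S T : Set V}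
    (h : S ⊆ coneGen T) : coneGen S ⊆ coneGen T := by
  rintro v ⟨n, c, x, hc, rfl⟩
  refine Finset.sum_induction _ (· ∈ coneGen T)
    (fun a b => coneGen_add) (coneGen_zero T) ?_
  intro i _
  exact coneGen_smul (hc i).1 (h (hc i).2)

lemma cone_subset_aux {V : Type*} [AddCommGroup V] [Module ℚ V]
    {P F : Set V} (hFP : F ⊆ P) {x₁ x₂ : V}
    (h₁ : x₁ ∈ F) (h₂ : x₂ ∈ relint F) :
    coneGen {v | ∃ y ∈ P, v = y - x₁} ⊆ coneGen {v | ∃ y ∈ P, v = y - x₂} := by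
  apply coneGen_subset
  rintro v ⟨y, hy, rfl⟩
  obtain ⟨ε, hε, hz⟩ := h₂.2 x₁ h₁
  have h1 : y - x₂ ∈ coneGen {v | ∃ y ∈ P, v = y - x₂} :=
    coneGen_mem ⟨y, hy, rfl⟩
  have h2 : x₂ - x₁ ∈ coneGen {v | ∃ y ∈ P, v = y - x₂} := by
    have : x₂ - x₁ = ε⁻¹ • ((x₂ + ε • (x₂ - x₁)) - x₂) := by
      rw [add_sub_cancel_left, smul_smul, inv_mul_cancel₀ hε.ne', one_smul]
    rw [this]
    exact coneGen_smul (by positivity) (coneGen_mem ⟨_, hFP hz, rfl⟩)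
  have : y - x₁ = (y - x₂) + (x₂ - x₁) := by abel
  rw [this]
  exact coneGen_add h1 h2

/-- For a convex polyhedral cone `P` and a face `F = P ∩ {φ = 0}` (with `φ`
linear and nonnegative on `P`), the cone of `P` viewed from `F`, i.e. the cone
generated by `{ y − x : y ∈ P }`, does not depend on the choice of `x` in the
relative interior of `F`. -/
theorem stmt6 {V : Type*} [AddCommGroup V] [Module ℚ V] [FiniteDimensional ℚ V]
    (P : Set V)
    (hPconv : Convex ℚ P)
    (hPcone : ∀ c : ℚ, 0 ≤ c → ∀ x ∈ P, c • x ∈ P)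
    (hpoly : ∃ (n : ℕ) (ψ : Fin n → V →ₗ[ℚ] ℚ), P = {v | ∀ i, 0 ≤ ψ i v})
    (φ : V →ₗ[ℚ] ℚ) (hφ : ∀ p ∈ P, 0 ≤ φ p)
    (x₁ x₂ : V)
    (h₁ : x₁ ∈ relint {p ∈ P | φ p = 0})
    (h₂ : x₂ ∈ relint {p ∈ P | φ p = 0}) :
    coneGen {v | ∃ y ∈ P, v = y - x₁} = coneGen {v | ∃ y ∈ P, v = y - x₂} := by
  have hFP : {p ∈ P | φ p = 0} ⊆ P := fun p hp => hp.1
  exact Set.Subset.antisymm (cone_subset_aux hFP h₁.1 h₂) (cone_subset_aux hFP h₂.1 h₁)
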